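/- Let N ≥ 1, and equip the space of N×N complex matrices with the normalized Hilbert–Schmidt inner product ⟨A,B⟩ = tr(A†B)/N. Let (P_i)_{i∈I} be an orthonormal basis of this matrix space with respect to this inner product. Let G' > 0 and 0 < ε < 1 be real constants, and for each i ∈ I let χ_i, c_i be real numbers. Suppose that for each integer K ≥ 1 we are given a linear map Λ_K on N×N complex matrices with Λ_K(P_i) = λ_{K,i} P_i, where the real numbers λ_{K,i} satisfy |λ_{K,i} − c_i · χ_i^K| ≤ G'·ε^K for all i and K. Define, for each K ≥ 1, the linear map Φ_K by Φ_K(P_i) = c_i χ_i^K P_i. Then for every positive semidefinite N×N matrix ρ with tr(ρ) = 1, every Hermitian Π with 0 ≤ Π ≤ I, and every K ≥ 1: |tr(Π Λ_K(ρ)) − tr(Π Φ_K(ρ))| ≤ G'·√N·ε^K. -/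

import Mathlib

/-!
Expand `ρ` and `Π` in the orthonormal basis `P`, with coefficients `a i` and `b i`. Since `Π` is
Hermitian, `tr(Π (Λ_K - Φ_K) ρ) = N ∑ i, conj (b i) (λ_{K,i} - c_i χ_i^K) a i`, so by
Cauchy–Schwarz its modulus is at most `N G' ε^K ‖a‖₂ ‖b‖₂`. Parseval turns the coefficient norms
into traces: `N ‖a‖₂² = tr ρ² ≤ (tr ρ)² = 1` and `N ‖b‖₂² = tr Π² ≤ tr Π ≤ N`, the last two
because `tr (Π (1 - Π)) ≥ 0` and `tr (1 - Π) ≥ 0`. Hence the bound `G' √N ε^K`.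
-/

open scoped BigOperators Matrix ComplexOrder

namespace Matrix

variable {𝕜 n : Type*} [RCLike 𝕜] [Fintype n]

open scoped MatrixOrder in
theorem PosSemidef.trace_mul_nonneg {A B : Matrix n n 𝕜} (hA : A.PosSemidef)
    (hB : B.PosSemidef) : 0 ≤ (A * B).trace := by
  classical
  obtain ⟨C, rfl⟩ := CStarAlgebra.nonneg_iff_eq_star_mul_self.mp hA.nonneg
  rw [star_eq_conjTranspose, Matrix.mul_assoc, trace_mul_comm]
  exact (hB.mul_mul_conjTranspose_same C).trace_nonneg

theorem IsHermitian.trace_mul_self [DecidableEq n] {A : Matrix n n 𝕜} (hA : A.IsHermitian) :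
    (A * A).trace = ∑ i, ((hA.eigenvalues i ^ 2 : ℝ) : 𝕜) := by
  conv_lhs => rw [hA.spectral_theorem, ← map_mul, Unitary.conjStarAlgAut_apply, trace_mul_cycle,
    Unitary.coe_star_mul_self, one_mul, diagonal_mul_diagonal, trace_diagonal]
  simp [sq]

theorem PosSemidef.trace_mul_self_le_sq_trace {A : Matrix n n 𝕜} (hA : A.PosSemidef) :
    (A * A).trace ≤ A.trace ^ 2 := by
  classical
  rw [hA.isHermitian.trace_mul_self, hA.isHermitian.trace_eq_sum_eigenvalues]
  exact_mod_cast Finset.sum_sq_le_sq_sum_of_nonneg fun i _ => hA.eigenvalues_nonneg i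

theorem PosSemidef.trace_mul_self_le_card [DecidableEq n] {A : Matrix n n 𝕜}
    (hA : A.PosSemidef) (hA1 : (1 - A).PosSemidef) : (A * A).trace ≤ Fintype.card n := by
  have hA_sub := hA.trace_mul_nonneg hA1
  have hA1_tr := hA1.trace_nonneg
  rw [Matrix.mul_sub, Matrix.mul_one, trace_sub, sub_nonneg] at hA_sub
  rw [trace_sub, trace_one, sub_nonneg] at hA1_tr
  exact hA_sub.trans hA1_tr

section OrthogonalBasis

variable {ι : Type*} [Fintype ι] [DecidableEq ι] {P : Module.Basis ι 𝕜 (Matrix n n 𝕜)} {r : 𝕜}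

theorem trace_conjTranspose_basis_mul
    (hP : ∀ i j, ((P i)ᴴ * P j).trace = if i = j then r else 0) (M : Matrix n n 𝕜) (i : ι) :
    ((P i)ᴴ * M).trace = r * P.repr M i := by
  conv_lhs => rw [← P.sum_repr M]
  simp only [Matrix.mul_sum, trace_sum, Matrix.mul_smul, trace_smul, hP, smul_eq_mul, mul_ite,
    mul_zero, Finset.sum_ite_eq, Finset.mem_univ, if_true]
  exact mul_comm _ _

theorem trace_conjTranspose_mul_eq_sum
    (hP : ∀ i j, ((P i)ᴴ * P j).trace = if i = j then r else 0) (M M' : Matrix n n 𝕜) :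
    (Mᴴ * M').trace = r * ∑ i, star (P.repr M i) * P.repr M' i := by
  conv_lhs => rw [← P.sum_repr M]
  simp only [conjTranspose_sum, conjTranspose_smul, Finset.sum_mul, smul_mul, trace_sum,
    trace_smul, trace_conjTranspose_basis_mul hP, Finset.mul_sum, smul_eq_mul]
  exact Finset.sum_congr rfl fun i _ => by ring

theorem trace_conjTranspose_mul_self_eq_sum
    (hP : ∀ i j, ((P i)ᴴ * P j).trace = if i = j then r else 0) (M : Matrix n n 𝕜) :
    (Mᴴ * M).trace = r * ((∑ i, ‖P.repr M i‖ ^ 2 : ℝ) : 𝕜) := by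
  simp [trace_conjTranspose_mul_eq_sum hP, RCLike.star_def, RCLike.conj_mul]

theorem card_mul_sum_norm_repr_sq_le_one
    (hP : ∀ i j, ((P i)ᴴ * P j).trace = if i = j then (Fintype.card n : 𝕜) else 0)
    {ρ : Matrix n n 𝕜} (hρ : ρ.PosSemidef) (hρ_tr : ρ.trace = 1) :
    Fintype.card n * ∑ i, ‖P.repr ρ i‖ ^ 2 ≤ 1 := by
  have h := hρ.trace_mul_self_le_sq_trace
  nth_rw 1 [← hρ.isHermitian.eq] at h
  rwa [trace_conjTranspose_mul_self_eq_sum hP, hρ_tr, one_pow, ← RCLike.ofReal_natCast,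
    ← RCLike.ofReal_mul, ← RCLike.ofReal_one, RCLike.ofReal_le_ofReal] at h

theorem sum_norm_repr_sq_le_one [DecidableEq n] [Nonempty n]
    (hP : ∀ i j, ((P i)ᴴ * P j).trace = if i = j then (Fintype.card n : 𝕜) else 0)
    {A : Matrix n n 𝕜} (hA : A.PosSemidef) (hA1 : (1 - A).PosSemidef) :
    ∑ i, ‖P.repr A i‖ ^ 2 ≤ 1 := by
  have h := hA.trace_mul_self_le_card hA1
  nth_rw 1 [← hA.isHermitian.eq] at h
  rw [trace_conjTranspose_mul_self_eq_sum hP, ← RCLike.ofReal_natCast, ← RCLike.ofReal_mul,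
    RCLike.ofReal_le_ofReal] at h
  exact (mul_le_iff_le_one_right (by exact_mod_cast Fintype.card_pos)).mp h

end OrthogonalBasis

end Matrix

theorem Module.Basis.repr_apply_eq_mul_of_apply_eq_smul {ι R M : Type*} [CommSemiring R]
    [AddCommMonoid M] [Module R M] (P : Basis ι R M) {L : M →ₗ[R] M} {f : ι → R}
    (hL : ∀ i, L (P i) = f i • P i) (x : M) (i : ι) : P.repr (L x) i = f i * P.repr x i := by
  classical
  have : Finsupp.lapply i ∘ₗ P.repr.toLinearMap ∘ₗ L =
      f i • (Finsupp.lapply i ∘ₗ P.repr.toLinearMap) := P.ext fun j => by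
    by_cases h : j = i <;> simp [hL, h]
  exact LinearMap.congr_fun this x

theorem norm_sum_star_mul_mul_le {𝕜 ι : Type*} [RCLike 𝕜] [Fintype ι] (a b d : ι → 𝕜) {δ : ℝ}
    (hδ : 0 ≤ δ) (hd : ∀ i, ‖d i‖ ≤ δ) :
    ‖∑ i, star (b i) * d i * a i‖ ≤ δ * (√(∑ i, ‖a i‖ ^ 2) * √(∑ i, ‖b i‖ ^ 2)) := by
  calc ‖∑ i, star (b i) * d i * a i‖ ≤ ∑ i, ‖star (b i) * d i * a i‖ := norm_sum_le _ _
    _ ≤ ∑ i, δ * (‖a i‖ * ‖b i‖) := Finset.sum_le_sum fun i _ => by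
        rw [norm_mul, norm_mul, norm_star]
        calc ‖b i‖ * ‖d i‖ * ‖a i‖ ≤ ‖b i‖ * δ * ‖a i‖ := by gcongr; exact hd i
          _ = δ * (‖a i‖ * ‖b i‖) := by ring
    _ ≤ δ * (√(∑ i, ‖a i‖ ^ 2) * √(∑ i, ‖b i‖ ^ 2)) := by
        rw [← Finset.mul_sum]
        exact mul_le_mul_of_nonneg_left (Real.sum_mul_le_sqrt_mul_sqrt _ _ _) hδ

theorem stmt13_general {N : ℕ} (hN : 1 ≤ N) {ι : Type*} [Fintype ι] [DecidableEq ι]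
    (P : Module.Basis ι ℂ (Matrix (Fin N) (Fin N) ℂ))
    (hortho : ∀ i j, (Matrix.trace ((P i)ᴴ * P j)) / (N : ℂ) = if i = j then 1 else 0)
    (G' : ℝ) (hG' : 0 < G')
    (ε : ℝ) (hε0 : 0 < ε)
    (χ c : ι → ℝ)
    (Λ : ℕ → Matrix (Fin N) (Fin N) ℂ →ₗ[ℂ] Matrix (Fin N) (Fin N) ℂ)
    (lam : ℕ → ι → ℝ)
    (hΛ : ∀ K, 1 ≤ K → ∀ i, Λ K (P i) = ((lam K i : ℝ) : ℂ) • P i)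
    (hlam : ∀ K, 1 ≤ K → ∀ i, |lam K i - c i * χ i ^ K| ≤ G' * ε ^ K)
    (Φ : ℕ → Matrix (Fin N) (Fin N) ℂ →ₗ[ℂ] Matrix (Fin N) (Fin N) ℂ)
    (hΦ : ∀ K, 1 ≤ K → ∀ i, Φ K (P i) = ((c i * χ i ^ K : ℝ) : ℂ) • P i) :
    ∀ (ρ : Matrix (Fin N) (Fin N) ℂ), ρ.PosSemidef → ρ.trace = 1 →
      ∀ (Pm : Matrix (Fin N) (Fin N) ℂ), Pm.PosSemidef → (1 - Pm).PosSemidef →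
        ∀ K : ℕ, 1 ≤ K →
          ‖(Pm * Λ K ρ).trace - (Pm * Φ K ρ).trace‖ ≤
            G' * Real.sqrt N * ε ^ K := by
  intro ρ hρ hρ_tr Pm hPm hPm1 K hK
  have hN0 : (0 : ℝ) < N := by exact_mod_cast hN
  have : Nonempty (Fin N) := ⟨⟨0, hN⟩⟩
  have hP : ∀ i j, ((P i)ᴴ * P j).trace = if i = j then (Fintype.card (Fin N) : ℂ) else 0 :=
    fun i j => by
      rw [Fintype.card_fin, ← div_mul_cancel₀ ((P i)ᴴ * P j).trace
        (by exact_mod_cast hN0.ne' : (N : ℂ) ≠ 0), hortho, ite_mul, one_mul, zero_mul]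
  have hD : ∀ i, (Λ K - Φ K) (P i) = ((lam K i - c i * χ i ^ K : ℝ) : ℂ) • P i := fun i => by
    rw [LinearMap.sub_apply, hΛ K hK, hΦ K hK, ← sub_smul, Complex.ofReal_sub]
  have hdiff : (Pm * Λ K ρ).trace - (Pm * Φ K ρ).trace = N * ∑ i, star (P.repr Pm i) *
      ((lam K i - c i * χ i ^ K : ℝ) : ℂ) * P.repr ρ i := by
    rw [← Matrix.trace_sub, ← Matrix.mul_sub, ← LinearMap.sub_apply]
    nth_rw 1 [← hPm.isHermitian.eq]
    rw [Matrix.trace_conjTranspose_mul_eq_sum hP, Fintype.card_fin]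
    simp only [P.repr_apply_eq_mul_of_apply_eq_smul hD, mul_assoc]
  have hρ_sq := Matrix.card_mul_sum_norm_repr_sq_le_one hP hρ hρ_tr
  have hPm_sq := Matrix.sum_norm_repr_sq_le_one hP hPm hPm1
  rw [Fintype.card_fin] at hρ_sq
  set A := ∑ i, ‖P.repr ρ i‖ ^ 2
  set B := ∑ i, ‖P.repr Pm i‖ ^ 2
  calc _ = N * ‖∑ i, star (P.repr Pm i) * ((lam K i - c i * χ i ^ K : ℝ) : ℂ) * P.repr ρ i‖ := by
        rw [hdiff, norm_mul, Complex.norm_natCast]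
    _ ≤ N * (G' * ε ^ K * (√A * √B)) := by
        gcongr
        exact norm_sum_star_mul_mul_le _ _ _ (by positivity)
          fun i => by simpa only [Complex.norm_real, Real.norm_eq_abs] using hlam K hK i
    _ = G' * √N * ε ^ K * (√(N * A) * √B) := by
        rw [Real.sqrt_mul hN0.le]
        linear_combination (-(G' * ε ^ K * √A * √B)) * Real.mul_self_sqrt hN0.le
    _ ≤ G' * √N * ε ^ K * (1 * 1) := by
        gcongr
        exacts [Real.sqrt_le_one.mpr hρ_sq, Real.sqrt_le_one.mpr hPm_sq]
    _ = G' * √N * ε ^ K := by ring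

theorem stmt13 {N : ℕ} (hN : 1 ≤ N) {ι : Type*} [Fintype ι] [DecidableEq ι]
    (P : Module.Basis ι ℂ (Matrix (Fin N) (Fin N) ℂ))
    (hortho : ∀ i j, (Matrix.trace ((P i)ᴴ * P j)) / (N : ℂ) = if i = j then 1 else 0)
    (G' : ℝ) (hG' : 0 < G')
    (ε : ℝ) (hε0 : 0 < ε) (hε1 : ε < 1)
    (χ c : ι → ℝ)
    (Λ : ℕ → Matrix (Fin N) (Fin N) ℂ →ₗ[ℂ] Matrix (Fin N) (Fin N) ℂ)
    (lam : ℕ → ι → ℝ)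
    (hΛ : ∀ K, 1 ≤ K → ∀ i, Λ K (P i) = ((lam K i : ℝ) : ℂ) • P i)
    (hlam : ∀ K, 1 ≤ K → ∀ i, |lam K i - c i * χ i ^ K| ≤ G' * ε ^ K)
    (Φ : ℕ → Matrix (Fin N) (Fin N) ℂ →ₗ[ℂ] Matrix (Fin N) (Fin N) ℂ)
    (hΦ : ∀ K, 1 ≤ K → ∀ i, Φ K (P i) = ((c i * χ i ^ K : ℝ) : ℂ) • P i) :
    ∀ (ρ : Matrix (Fin N) (Fin N) ℂ), ρ.PosSemidef → ρ.trace = 1 →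
      ∀ (Pm : Matrix (Fin N) (Fin N) ℂ), Pm.PosSemidef → (1 - Pm).PosSemidef →
        ∀ K : ℕ, 1 ≤ K →
          ‖(Pm * Λ K ρ).trace - (Pm * Φ K ρ).trace‖ ≤
            G' * Real.sqrt N * ε ^ K :=
  stmt13_general hN P hortho G' hG' ε hε0 χ c Λ lam hΛ hlam Φ hΦ
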